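/- Fix μ ∈ {+1,−1}, v ∈ ℝ³, x ∈ ℝ³. Let m : ℝ³ → ℂ be continuous with compact support contained in ℝ³∖{0}, let χ : ℝ → ℝ be continuously differentiable with χ(r) = 0 for r ≤ 1, and let G : (0,∞) × ℝ³ → ℂ be continuous, continuously differentiable in t, with G and ∂_t G bounded on compact subsets. For t > 0 define Φ(t,ξ) := (x + t v̂)·ξ − t μ |ξ|, T(t) := ∫_{ℝ³} e^{iΦ(t,ξ)} · ( −i m(ξ) / ( v̂·ξ − μ|ξ| ) ) · G(t,ξ) · χ( t(|ξ| − μ v̂·ξ) ) dξ, H(t) := ∫_{ℝ³} e^{iΦ(t,ξ)} · ( i m(ξ) / ( v̂·ξ − μ|ξ| ) ) · ∂_t G(t,ξ) · χ( t(|ξ| − μ v̂·ξ) ) dξ, and K(t) := ∫_{ℝ³} e^{iΦ(t,ξ)} · m(ξ) · G(t,ξ) · [ −iμ·χ′( t(|ξ| − μ v̂·ξ) ) + ( 1 − χ( t(|ξ| − μ v̂·ξ) ) ) ] dξ (the denominators are nonzero on the support of the integrands). Then T is differentiable on (0,∞) and for every t > 0: T′(t) + H(t) + K(t) = ∫_{ℝ³}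 e^{iΦ(t,ξ)} m(ξ) G(t,ξ) dξ. -/

import Mathlib

open MeasureTheory
open scoped RealInnerProductSpace

noncomputable section

abbrev E3 : Type := EuclideanSpace ℝ (Fin 3)

/-- The relativistic velocity `v̂ = v / √(1+|v|²)`. -/
def vhat (v : E3) : E3 := (Real.sqrt (1 + ‖v‖ ^ 2))⁻¹ • v

/-- The oscillating phase `e^{iΦ(t,ξ)}`, `Φ(t,ξ) = (x + t v̂)·ξ - t μ |ξ|`. -/
def phase14 (μ : ℝ) (x v : E3) (t : ℝ) (ξ : E3) : ℂ :=
  Complex.exp (Complex.I * ((⟪x + t • vhat v, ξ⟫ - t * μ * ‖ξ‖ : ℝ) : ℂ))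

/-- The operator `T(t)` (the time-antiderivative part of the good derivative). -/
def Tdef (μ : ℝ) (x v : E3) (m : E3 → ℂ) (χ : ℝ → ℝ) (G : ℝ → E3 → ℂ) (t : ℝ) : ℂ :=
  ∫ ξ : E3, phase14 μ x v t ξ *
    (-Complex.I * m ξ / ((⟪vhat v, ξ⟫ - μ * ‖ξ‖ : ℝ) : ℂ)) * G t ξ *
    ((χ (t * (‖ξ‖ - μ * ⟪vhat v, ξ⟫)) : ℝ) : ℂ)

/-- The error operator `H(t)` in which the time derivative falls on the profile `G`. -/
def Hdef (μ : ℝ) (x v : E3) (m : E3 → ℂ) (χ : ℝ → ℝ) (G' : ℝ → E3 → ℂ) (t : ℝ) : ℂ :=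
  ∫ ξ : E3, phase14 μ x v t ξ *
    (Complex.I * m ξ / ((⟪vhat v, ξ⟫ - μ * ‖ξ‖ : ℝ) : ℂ)) * G' t ξ *
    ((χ (t * (‖ξ‖ - μ * ⟪vhat v, ξ⟫)) : ℝ) : ℂ)

/-- The error operator `K(t)` collecting the cutoff terms. -/
def Kdef (μ : ℝ) (x v : E3) (m : E3 → ℂ) (χ : ℝ → ℝ) (G : ℝ → E3 → ℂ) (t : ℝ) : ℂ :=
  ∫ ξ : E3, phase14 μ x v t ξ * m ξ * G t ξ *
    (-Complex.I * (μ : ℂ) * ((deriv χ (t * (‖ξ‖ - μ * ⟪vhat v, ξ⟫)) : ℝ) : ℂ) +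
      ((1 - χ (t * (‖ξ‖ - μ * ⟪vhat v, ξ⟫)) : ℝ) : ℂ))

/-! The integrand of `T` is `-i e^{iΦ} m G · χ(t(|ξ| - μ v̂·ξ)) / (v̂·ξ - μ|ξ|)`. Because
`|ξ| - μ v̂·ξ = -μ (v̂·ξ - μ|ξ|)`, the cutoff vanishes near the zeros of the denominator, so this
integrand is jointly continuous, `C¹` in `t`, and supported in `tsupport m`; hence `T` may be
differentiated under the integral sign. In the `t`-derivative, `∂ₜ e^{iΦ} = i (v̂·ξ - μ|ξ|) e^{iΦ}`
and `∂ₜ χ(t(|ξ| - μ v̂·ξ)) = -μ (v̂·ξ - μ|ξ|) χ'` both cancel the denominator, leaving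
`e^{iΦ} m G (χ + iμχ')` plus the term with `∂ₜ G`, which is `-H`; adding `K` leaves
`∫ e^{iΦ} m G`. -/

open Set Filter Topology

theorem hasDerivAt_integral_of_continuousOn_of_compact
    {X H : Type*} [TopologicalSpace X] [T2Space X] [MeasurableSpace X] [OpensMeasurableSpace X]
    {ν : Measure X} [IsFiniteMeasureOnCompacts ν]
    [NormedAddCommGroup H] [NormedSpace ℝ H] [CompleteSpace H]
    {F F' : ℝ → X → H} {U : Set ℝ} {K : Set X} (hU : IsOpen U) (hK : IsCompact K)
    (hF : ContinuousOn (fun p : ℝ × X => F p.1 p.2) (U ×ˢ univ))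
    (hF' : ContinuousOn (fun p : ℝ × X => F' p.1 p.2) (U ×ˢ univ))
    (hFK : ∀ s ∈ U, ∀ ξ ∉ K, F s ξ = 0)
    (hderiv : ∀ s ∈ U, ∀ ξ, HasDerivAt (F · ξ) (F' s ξ) s) {t : ℝ} (ht : t ∈ U) :
    Integrable (F' t) ν ∧ HasDerivAt (fun s => ∫ ξ, F s ξ ∂ν) (∫ ξ, F' t ξ ∂ν) t := by
  have slice {f : ℝ → X → H} (hf : ContinuousOn (fun p : ℝ × X => f p.1 p.2) (U ×ˢ univ))
      {s : ℝ} (hs : s ∈ U) : Continuous (f s) :=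
    hf.comp_continuous (.prodMk_right s) fun _ => ⟨hs, trivial⟩
  have hF'K : ∀ s ∈ U, ∀ ξ ∉ K, F' s ξ = 0 := fun s hs ξ hξ =>
    (hderiv s hs ξ).unique <| (hasDerivAt_const s 0).congr_of_eventuallyEq <|
      eventually_of_mem (hU.mem_nhds hs) fun r hr => hFK r hr ξ hξ
  have hFint : ∀ s ∈ U, Integrable (F s) ν := fun s hs =>
    (slice hF hs).integrable_of_hasCompactSupport (.intro hK (hFK s hs))
  have hF'int : Integrable (F' t) ν :=
    (slice hF' ht).integrable_of_hasCompactSupport (.intro hK (hF'K t ht))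
  obtain ⟨ε, hε, hεU⟩ := Metric.nhds_basis_closedBall.mem_iff.1 (hU.mem_nhds ht)
  obtain ⟨C, hC⟩ := ((isCompact_closedBall t ε).prod hK).exists_bound_of_continuousOn
    (hF'.mono (prod_mono hεU (subset_univ K)))
  refine hasDerivAt_integral_of_dominated_loc_of_deriv_le (bound := K.indicator fun _ => C)
    (Metric.closedBall_mem_nhds t hε)
    (eventually_of_mem (hU.mem_nhds ht) fun s hs => (hFint s hs).aestronglyMeasurable)
    (hFint t ht) hF'int.aestronglyMeasurable (ae_of_all _ fun ξ s hs => ?_)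
    ((integrable_indicator_iff hK.measurableSet).2 (integrableOn_const hK.measure_lt_top.ne))
    (ae_of_all _ fun ξ s hs => hderiv s (hεU hs) ξ)
  by_cases hξ : ξ ∈ K
  · simpa [indicator_of_mem hξ] using hC (s, ξ) ⟨hs, hξ⟩
  · simp [indicator_of_notMem hξ, hF'K s (hεU hs) ξ hξ]

theorem continuous_cutoff_div {X : Type*} [TopologicalSpace X] {χ : ℝ → ℝ} (hχ : Continuous χ)
    (hχ0 : ∀ r < 1, χ r = 0) {a d : X → ℝ} (ha : Continuous a) (hd : Continuous d)
    (had : ∀ p, d p = 0 → a p < 1) : Continuous fun p => χ (a p) / d p := by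
  refine continuous_iff_continuousAt.2 fun p => ?_
  by_cases hp : d p = 0
  · refine (continuousAt_const (y := (0 : ℝ))).congr ?_
    filter_upwards [ha.continuousAt.eventually (gt_mem_nhds (had p hp))] with q hq
    simp [hχ0 _ hq]
  · exact (hχ.comp ha).continuousAt.div hd.continuousAt hp

theorem norm_sub_mul_inner_eq_neg_mul {μ : ℝ} (hμ : μ ^ 2 = 1) (w ξ : E3) :
    ‖ξ‖ - μ * ⟪w, ξ⟫ = -μ * (⟪w, ξ⟫ - μ * ‖ξ‖) := by
  linear_combination (-‖ξ‖) * hμ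

/-- `χ(s(|ξ| - μ v̂·ξ)) / (v̂·ξ - μ|ξ|)`; where the denominator vanishes, so does the argument of
`χ` (for `μ² = 1`), so the junk value `x / 0 = 0` agrees with the continuous extension. -/
def cutoffQuot (μ : ℝ) (v : E3) (χ : ℝ → ℝ) (s : ℝ) (ξ : E3) : ℝ :=
  χ (s * (‖ξ‖ - μ * ⟪vhat v, ξ⟫)) / (⟪vhat v, ξ⟫ - μ * ‖ξ‖)

section cutoffQuot

variable {μ : ℝ} (v : E3) {χ : ℝ → ℝ}

theorem continuous_cutoffQuot (hμ : μ ^ 2 = 1) (hχ0 : ∀ r ≤ 1, χ r = 0) (hχ : Continuous χ) :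
    Continuous fun p : ℝ × E3 => cutoffQuot μ v χ p.1 p.2 :=
  continuous_cutoff_div hχ (fun r hr => hχ0 r hr.le) (by fun_prop) (by fun_prop) fun p hp => by
    simp [norm_sub_mul_inner_eq_neg_mul hμ, hp]

theorem mul_cutoffQuot (hμ : μ ^ 2 = 1) (hχ0 : ∀ r ≤ 1, χ r = 0) (s : ℝ) (ξ : E3) :
    (⟪vhat v, ξ⟫ - μ * ‖ξ‖) * cutoffQuot μ v χ s ξ = χ (s * (‖ξ‖ - μ * ⟪vhat v, ξ⟫)) := by
  by_cases hd : ⟪vhat v, ξ⟫ - μ * ‖ξ‖ = 0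
  · simp [norm_sub_mul_inner_eq_neg_mul hμ, hd, hχ0]
  · exact mul_div_cancel₀ _ hd

theorem hasDerivAt_cutoffQuot (hμ : μ ^ 2 = 1) (hχ0 : ∀ r ≤ 1, χ r = 0)
    (hχ : Differentiable ℝ χ) (s : ℝ) (ξ : E3) :
    HasDerivAt (fun r => cutoffQuot μ v χ r ξ)
      (-μ * deriv χ (s * (‖ξ‖ - μ * ⟪vhat v, ξ⟫))) s := by
  simp only [cutoffQuot, norm_sub_mul_inner_eq_neg_mul hμ]
  set d := ⟪vhat v, ξ⟫ - μ * ‖ξ‖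
  by_cases hd : d = 0
  · have hχ' : deriv χ 0 = 0 :=
      (eventuallyEq_of_mem (Iic_mem_nhds one_pos) hχ0).deriv_eq.trans (deriv_const 0 0)
    simpa [hd, hχ'] using hasDerivAt_const s (0 : ℝ)
  · refine (((hχ _).hasDerivAt.comp s ((hasDerivAt_id' s).mul_const (-μ * d))).div_const
      d).congr_deriv ?_
    field_simp

end cutoffQuot

theorem continuous_phase14 (μ : ℝ) (x v : E3) :
    Continuous fun p : ℝ × E3 => phase14 μ x v p.1 p.2 := by
  unfold phase14
  fun_prop

theorem hasDerivAt_phase14 (μ : ℝ) (x v ξ : E3) (s : ℝ) :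
    HasDerivAt (fun r => phase14 μ x v r ξ)
      (Complex.I * (⟪vhat v, ξ⟫ - μ * ‖ξ‖ : ℝ) * phase14 μ x v s ξ) s := by
  set d := ⟪vhat v, ξ⟫ - μ * ‖ξ‖
  have hΦ : ∀ r : ℝ, ⟪x + r • vhat v, ξ⟫ - r * μ * ‖ξ‖ = ⟪x, ξ⟫ + r * d := fun r => by
    rw [inner_add_left, real_inner_smul_left]
    ring
  simp only [phase14, hΦ]
  refine ((((hasDerivAt_id' s).mul_const d).const_add ⟪x, ξ⟫).ofReal_comp.const_mul
    Complex.I).cexp.congr_deriv ?_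
  push_cast
  ring

def integrandT (μ : ℝ) (x v : E3) (m : E3 → ℂ) (χ : ℝ → ℝ) (G : ℝ → E3 → ℂ) (s : ℝ)
    (ξ : E3) : ℂ :=
  -Complex.I * phase14 μ x v s ξ * m ξ * G s ξ * cutoffQuot μ v χ s ξ

def derivIntegrandT (μ : ℝ) (x v : E3) (m : E3 → ℂ) (χ : ℝ → ℝ) (G G' : ℝ → E3 → ℂ) (s : ℝ)
    (ξ : E3) : ℂ :=
  phase14 μ x v s ξ * m ξ *
    (G s ξ * (χ (s * (‖ξ‖ - μ * ⟪vhat v, ξ⟫)) +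
        Complex.I * μ * deriv χ (s * (‖ξ‖ - μ * ⟪vhat v, ξ⟫))) -
      Complex.I * G' s ξ * cutoffQuot μ v χ s ξ)

section integrandT

variable {μ : ℝ} (x v : E3) {m : E3 → ℂ} {χ : ℝ → ℝ} {G G' : ℝ → E3 → ℂ}

theorem hasDerivAt_integrandT (hμ : μ ^ 2 = 1) (hχ0 : ∀ r ≤ 1, χ r = 0)
    (hχ : Differentiable ℝ χ) {s : ℝ} {ξ : E3} (hG : HasDerivAt (fun r => G r ξ) (G' s ξ) s) :
    HasDerivAt (fun r => integrandT μ x v m χ G r ξ) (derivIntegrandT μ x v m χ G G' s ξ) s := by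
  refine (((((hasDerivAt_phase14 μ x v ξ s).const_mul (-Complex.I)).mul_const (m ξ)).mul
    hG).mul (hasDerivAt_cutoffQuot v hμ hχ0 hχ s ξ).ofReal_comp).congr_deriv ?_
  have hq : ((⟪vhat v, ξ⟫ - μ * ‖ξ‖ : ℝ) : ℂ) * cutoffQuot μ v χ s ξ =
      χ (s * (‖ξ‖ - μ * ⟪vhat v, ξ⟫)) := by
    exact_mod_cast mul_cutoffQuot v hμ hχ0 s ξ
  simp only [derivIntegrandT, Pi.mul_apply]
  push_cast at hq ⊢
  linear_combination (phase14 μ x v s ξ * m ξ * G s ξ) * hq -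
    ((⟪vhat v, ξ⟫ - μ * ‖ξ‖ : ℂ) * phase14 μ x v s ξ * m ξ * G s ξ * cutoffQuot μ v χ s ξ) *
      Complex.I_sq

theorem continuousOn_integrandT (hμ : μ ^ 2 = 1) (hχ0 : ∀ r ≤ 1, χ r = 0) (hχ : Continuous χ)
    (hm : Continuous m) {S : Set (ℝ × E3)} (hG : ContinuousOn (fun p : ℝ × E3 => G p.1 p.2) S) :
    ContinuousOn (fun p : ℝ × E3 => integrandT μ x v m χ G p.1 p.2) S := by
  have hφ := continuous_phase14 μ x v
  have hq := continuous_cutoffQuot v hμ hχ0 hχ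
  unfold integrandT
  fun_prop

theorem continuousOn_derivIntegrandT (hμ : μ ^ 2 = 1) (hχ0 : ∀ r ≤ 1, χ r = 0)
    (hχ : ContDiff ℝ 1 χ) (hm : Continuous m) {S : Set (ℝ × E3)}
    (hG : ContinuousOn (fun p : ℝ × E3 => G p.1 p.2) S)
    (hG' : ContinuousOn (fun p : ℝ × E3 => G' p.1 p.2) S) :
    ContinuousOn (fun p : ℝ × E3 => derivIntegrandT μ x v m χ G G' p.1 p.2) S := by
  have hφ := continuous_phase14 μ x v
  have hq := continuous_cutoffQuot v hμ hχ0 hχ.continuous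
  have hχc := hχ.continuous
  have hχ'c := hχ.continuous_deriv le_rfl
  unfold derivIntegrandT
  fun_prop

end integrandT

theorem Tdef_eq_integral_integrandT (μ : ℝ) (x v : E3) (m : E3 → ℂ) (χ : ℝ → ℝ)
    (G : ℝ → E3 → ℂ) : Tdef μ x v m χ G = fun s => ∫ ξ, integrandT μ x v m χ G s ξ := by
  funext s
  refine integral_congr_ae (ae_of_all _ fun ξ => ?_)
  simp only [integrandT, cutoffQuot]
  push_cast
  ring

theorem Hdef_eq_integral (μ : ℝ) (x v : E3) (m : E3 → ℂ) (χ : ℝ → ℝ) (G' : ℝ → E3 → ℂ)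
    (t : ℝ) : Hdef μ x v m χ G' t =
      ∫ ξ, Complex.I * phase14 μ x v t ξ * m ξ * G' t ξ * cutoffQuot μ v χ t ξ := by
  refine integral_congr_ae (ae_of_all _ fun ξ => ?_)
  simp only [cutoffQuot]
  push_cast
  ring

theorem integral_derivIntegrandT_add_Hdef_add_Kdef {μ : ℝ} (hμ : μ ^ 2 = 1) (x v : E3)
    {m : E3 → ℂ} (hm : Continuous m) (hms : HasCompactSupport m) {χ : ℝ → ℝ}
    (hχ : ContDiff ℝ 1 χ) (hχ0 : ∀ r ≤ 1, χ r = 0) {G G' : ℝ → E3 → ℂ} {t : ℝ}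
    (hG : Continuous (G t)) (hG' : Continuous (G' t))
    (hint : Integrable (derivIntegrandT μ x v m χ G G' t)) :
    (∫ ξ, derivIntegrandT μ x v m χ G G' t ξ) + Hdef μ x v m χ G' t + Kdef μ x v m χ G t =
      ∫ ξ, phase14 μ x v t ξ * m ξ * G t ξ := by
  have integrable {f : E3 → ℂ} (hf : Continuous f) (hf0 : ∀ ξ ∉ tsupport m, f ξ = 0) :
      Integrable f :=
    hf.integrable_of_hasCompactSupport (.intro hms hf0)
  have hφ : Continuous (phase14 μ x v t) := by unfold phase14; fun_prop
  have hq : Continuous (cutoffQuot μ v χ t) :=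
    (continuous_cutoffQuot v hμ hχ0 hχ.continuous).comp' (.prodMk_right t)
  have hχc := hχ.continuous
  have hχ'c := hχ.continuous_deriv le_rfl
  have hH : Integrable fun ξ =>
      Complex.I * phase14 μ x v t ξ * m ξ * G' t ξ * cutoffQuot μ v χ t ξ :=
    integrable (by fun_prop) fun ξ hξ => by simp [image_eq_zero_of_notMem_tsupport hξ]
  have hK : Integrable fun ξ => phase14 μ x v t ξ * m ξ * G t ξ *
      (-Complex.I * (μ : ℂ) * ((deriv χ (t * (‖ξ‖ - μ * ⟪vhat v, ξ⟫)) : ℝ) : ℂ) +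
        ((1 - χ (t * (‖ξ‖ - μ * ⟪vhat v, ξ⟫)) : ℝ) : ℂ)) :=
    integrable (by fun_prop) fun ξ hξ => by simp [image_eq_zero_of_notMem_tsupport hξ]
  rw [Hdef_eq_integral, Kdef, ← integral_add' hint hH, ← integral_add (hint.add hH) hK]
  refine integral_congr_ae (ae_of_all _ fun ξ => ?_)
  simp only [derivIntegrandT, Pi.add_apply]
  push_cast
  ring

theorem stmt14_general (μ : ℝ) (hμ : μ = 1 ∨ μ = -1) (v x : E3)
    (m : E3 → ℂ) (hmc : Continuous m) (hms : HasCompactSupport m)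
    (χ : ℝ → ℝ) (hχ : ContDiff ℝ 1 χ) (hχ0 : ∀ r : ℝ, r ≤ 1 → χ r = 0)
    (G G' : ℝ → E3 → ℂ)
    (hG : ContinuousOn (fun p : ℝ × E3 => G p.1 p.2) (Set.Ioi 0 ×ˢ (Set.univ : Set E3)))
    (hG' : ContinuousOn (fun p : ℝ × E3 => G' p.1 p.2) (Set.Ioi 0 ×ˢ (Set.univ : Set E3)))
    (hder : ∀ ξ : E3, ∀ t : ℝ, 0 < t → HasDerivAt (fun s => G s ξ) (G' t ξ) t) :
    ∀ t : ℝ, 0 < t →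
      DifferentiableAt ℝ (Tdef μ x v m χ G) t ∧
        deriv (Tdef μ x v m χ G) t + Hdef μ x v m χ G' t + Kdef μ x v m χ G t =
          ∫ ξ : E3, phase14 μ x v t ξ * m ξ * G t ξ := by
  intro t ht
  have hμ2 : μ ^ 2 = 1 := by rcases hμ with rfl | rfl <;> norm_num
  obtain ⟨hint, hT⟩ := hasDerivAt_integral_of_continuousOn_of_compact
    (ν := volume) isOpen_Ioi hms
    (continuousOn_integrandT x v hμ2 hχ0 hχ.continuous hmc hG)
    (continuousOn_derivIntegrandT x v hμ2 hχ0 hχ hmc hG hG')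
    (fun s _ ξ hξ => by simp [integrandT, image_eq_zero_of_notMem_tsupport hξ])
    (fun s hs ξ => hasDerivAt_integrandT x v hμ2 hχ0 (hχ.differentiable one_ne_zero)
      (hder ξ s hs)) ht
  rw [← Tdef_eq_integral_integrandT] at hT
  refine ⟨hT.differentiableAt, hT.deriv ▸ ?_⟩
  exact integral_derivIntegrandT_add_Hdef_add_Kdef hμ2 x v hmc hms hχ hχ0
    (hG.comp_continuous (.prodMk_right t) fun _ => ⟨ht, trivial⟩)
    (hG'.comp_continuous (.prodMk_right t) fun _ => ⟨ht, trivial⟩) hint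

/-- Integration by parts in time: the good derivative of a half-wave decomposes as the time
derivative of a bilinear operator plus lower order errors, `T' + H + K = ∫ e^{iΦ} m G`. -/
theorem stmt14 (μ : ℝ) (hμ : μ = 1 ∨ μ = -1) (v x : E3)
    (m : E3 → ℂ) (hmc : Continuous m) (hms : HasCompactSupport m)
    (hm0 : (0 : E3) ∉ tsupport m)
    (χ : ℝ → ℝ) (hχ : ContDiff ℝ 1 χ) (hχ0 : ∀ r : ℝ, r ≤ 1 → χ r = 0)
    (G G' : ℝ → E3 → ℂ)
    (hG : ContinuousOn (fun p : ℝ × E3 => G p.1 p.2) (Set.Ioi 0 ×ˢ (Set.univ : Set E3)))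
    (hG' : ContinuousOn (fun p : ℝ × E3 => G' p.1 p.2) (Set.Ioi 0 ×ˢ (Set.univ : Set E3)))
    (hder : ∀ ξ : E3, ∀ t : ℝ, 0 < t → HasDerivAt (fun s => G s ξ) (G' t ξ) t) :
    ∀ t : ℝ, 0 < t →
      DifferentiableAt ℝ (Tdef μ x v m χ G) t ∧
        deriv (Tdef μ x v m χ G) t + Hdef μ x v m χ G' t + Kdef μ x v m χ G t =
          ∫ ξ : E3, phase14 μ x v t ξ * m ξ * G t ξ :=
  stmt14_general μ hμ v x m hmc hms χ hχ hχ0 G G' hG hG' hder
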